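/- Let n ≥ 2 and 1 ≤ r < n be integers and let h be a homeomorphism of 𝔠_{n,r} with h⁻¹ G_{n,r} h ⊆ G_{n,r}. Then for all words ν, η with U_ν ∪ U_η ≠ 𝔠_{n,r}, h acts on U_ν and U_η almost in the same fashion: there exists k ∈ ℕ such that for every χ ∈ List (Fin n) with length at least k, h acts in the same fashion on U_{ν⌢χ} and U_{η⌢χ}. -/

import Mathlib

open Set

namespace HigmanAut

/-- The one-sided infinite sequence space `𝔠_n` on `n` letters. -/
abbrev Cn (n : ℕ) : Type := ℕ → Fin n

/-- The Cantor space `𝔠_{n,r} = Fin r × (ℕ → Fin n)` (with the product topology,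
`Fin r` and `Fin n` discrete). -/
abbrev CNR (n r : ℕ) : Type := Fin r × Cn n

/-- A word: a letter from `Fin r` together with a finite list over `Fin n`. -/
abbrev Word (n r : ℕ) : Type := Fin r × List (Fin n)

/-- Self-homeomorphisms of `𝔠_{n,r}`. -/
abbrev Homeo (n r : ℕ) : Type := CNR n r ≃ₜ CNR n r

/-- Append a finite list to a word: `ν⌢w`. -/
def wApp {n r : ℕ} (ν : Word n r) (w : List (Fin n)) : Word n r := (ν.1, ν.2 ++ w)

/-- The point `ν⌢x` of `𝔠_{n,r}` determined by a word `ν` followed by `x ∈ 𝔠_n`. -/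
def wCat {n r : ℕ} (ν : Word n r) (x : Cn n) : CNR n r :=
  (ν.1, fun i => if h : i < ν.2.length then ν.2.get ⟨i, h⟩ else x (i - ν.2.length))

/-- The cone `U_ν` of a word `ν`. -/
def cone {n r : ℕ} (ν : Word n r) : Set (CNR n r) :=
  {p | p.1 = ν.1 ∧ ∀ (i : ℕ) (h : i < ν.2.length), p.2 i = ν.2.get ⟨i, h⟩}

/-- Membership in the Higman--Thompson group `G_{n,r}`: `g` is a prefix code map,
i.e. there are `k ≥ 1` and words `ν i`, `η i` whose cones partition `𝔠_{n,r}`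
with `g(ν i ⌢ x) = η i ⌢ x` for all `i`, `x`. -/
def IsHigman {n r : ℕ} (g : Homeo n r) : Prop :=
  ∃ k : ℕ, 0 < k ∧ ∃ ν η : Fin k → Word n r,
    (∀ p : CNR n r, ∃! i : Fin k, p ∈ cone (ν i)) ∧
    (∀ p : CNR n r, ∃! i : Fin k, p ∈ cone (η i)) ∧
    (∀ (i : Fin k) (x : Cn n), g (wCat (ν i) x) = wCat (η i) x)

/-- The Higman--Thompson group `G_{n,r}` as a set of homeomorphisms. -/
def higmanSet (n r : ℕ) : Set (Homeo n r) := {g | IsHigman g}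

/-- Conjugation: in the paper's right-action notation this is `g ↦ h⁻¹ g h`
(as a left function, `x ↦ h (g (h⁻¹ x))`). -/
def conjH {n r : ℕ} (h g : Homeo n r) : Homeo n r := (h.symm.trans g).trans h

/-- `h` acts in the same fashion on `U_α` and `U_β`: there are words `α'`, `β'`
and a common local action `f` with `h(α⌢x) = α'⌢f(x)` and `h(β⌢x) = β'⌢f(x)`. -/
def SameFashion {n r : ℕ} (h : Homeo n r) (α β : Word n r) : Prop :=
  ∃ (α' β' : Word n r) (f : Cn n → Cn n),
    (∀ x : Cn n, h (wCat α x) = wCat α' (f x)) ∧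
    (∀ x : Cn n, h (wCat β x) = wCat β' (f x))

/-- Tail equivalence on `𝔠_{n,r}`. -/
def TailEq {n r : ℕ} (x y : CNR n r) : Prop :=
  ∃ (ν η : Word n r) (z : Cn n), x = wCat ν z ∧ y = wCat η z

/-- `h` is pointwise canonical. -/
def PtwiseCanonical {n r : ℕ} (h : Homeo n r) : Prop :=
  ∀ x : CNR n r, ∃ (η₁ η₂ : Word n r) (y : Cn n), x = wCat η₁ y ∧ h x = wCat η₂ y

/-- `h` is densely canonical. -/
def DenselyCanonical {n r : ℕ} (h : Homeo n r) : Prop :=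
  ∀ U : Set (CNR n r), IsOpen U → U.Nonempty →
    ∃ η ζ : Word n r, cone η ⊆ U ∧ ∀ x : Cn n, h (wCat η x) = wCat ζ x

/-- `h` belongs to `H_{n,r,∼}`: `x ∼ y` iff `h(x) ∼ h(y)`. -/
def PreservesTailEq {n r : ℕ} (h : Homeo n r) : Prop :=
  ∀ x y : CNR n r, TailEq x y ↔ TailEq (h x) (h y)

/-- `ν` is a prefix of `η`, i.e. `U_η ⊆ U_ν`. -/
def WPrefix {n r : ℕ} (ν η : Word n r) : Prop := cone η ⊆ cone ν

/-- Two words are incomparable if neither is a prefix of the other. -/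
def Incomp {n r : ℕ} (ν η : Word n r) : Prop := ¬ WPrefix ν η ∧ ¬ WPrefix η ν


/-!
Choose a point `p ∉ U_ν ∪ U_η` and a cone `U_γ ∋ p` disjoint from `U_ν` and `U_η`. The
transposition `g` of `U_ν` and `U_γ` (`ν⌢x ↔ γ⌢x`) lies in `G_{n,r}`, hence so does `h g h⁻¹`,
which replaces prefixes on the pieces of a finite cone partition. As `h` is uniformly
continuous, for long `χ` the image `h(U_{ν⌢χ})` lies in a single piece, so
`h(ν⌢χ⌢x) = α⌢f(x)` and `h(γ⌢χ⌢x) = (h g h⁻¹)(α⌢f(x)) = β⌢f(x)`: `h` acts in the same fashion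
on `U_{ν⌢χ}` and `U_{γ⌢χ}`. The same holds for `η` and `γ`, and acting in the same fashion is
transitive, because `α⌢f(x) = β⌢f'(x)` for all `x` forces one of `f`, `f'` to be the other
preceded by a fixed word.
-/

section Words

variable {n r : ℕ}

-- `Cn n` unfolds to `Stream' (Fin n)`, but `rw` and `simp` do not see through that; these two
-- wrappers let Mathlib's stream lemmas be applied as terms.
def prepend (w : List (Fin n)) (x : Cn n) : Cn n := w ++ₛ x

def shift (m : ℕ) (x : Cn n) : Cn n := Stream'.drop m x

lemma prepend_append (u w : List (Fin n)) (x : Cn n) :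
    prepend (u ++ w) x = prepend u (prepend w x) :=
  Stream'.append_append_stream u w x

lemma shift_prepend (w : List (Fin n)) (x : Cn n) : shift w.length (prepend w x) = x :=
  Stream'.drop_append_stream w x

lemma shift_prepend_of_le {m : ℕ} {w : List (Fin n)} (hm : m ≤ w.length) (x : Cn n) :
    shift m (prepend w x) = prepend (w.drop m) x :=
  Stream'.drop_append_of_le_length m w x hm

lemma prepend_left_injective {u w : List (Fin n)} {x y : Cn n}
    (h : prepend u x = prepend w y) (hl : u.length = w.length) : u = w :=
  Stream'.append_left_injective u w x y h hl

lemma wCat_eq (μ : Word n r) (x : Cn n) : wCat μ x = (μ.1, prepend μ.2 x) := by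
  refine Prod.ext rfl (funext fun i => ?_)
  rcases lt_or_ge i μ.2.length with hi | hi
  · simp only [wCat, hi, dite_true, List.get_eq_getElem]
    exact (Stream'.get_append_left _ _ _ hi).symm
  · obtain ⟨j, rfl⟩ := Nat.exists_eq_add_of_le hi
    simp only [wCat, add_lt_iff_neg_left, not_lt_zero, dite_false, add_tsub_cancel_left]
    exact (Stream'.get_append_right j μ.2 x).symm

lemma wCat_wApp (μ : Word n r) (w : List (Fin n)) (x : Cn n) :
    wCat (wApp μ w) x = wCat μ (prepend w x) := by
  simp [wCat_eq, wApp, prepend_append]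

lemma wCat_mem_cone (μ : Word n r) (x : Cn n) : wCat μ x ∈ cone μ :=
  ⟨rfl, fun _ hi => by simp [wCat, hi]⟩

lemma wCat_shift_of_mem_cone {μ : Word n r} {p : CNR n r} (hp : p ∈ cone μ) :
    wCat μ (shift μ.2.length p.2) = p := by
  refine Prod.ext hp.1.symm (funext fun i => ?_)
  by_cases hi : i < μ.2.length
  · simp [wCat, hi, hp.2 i hi]
  · simp [wCat, hi, shift, Stream'.drop, Stream'.get, Nat.sub_add_cancel (not_lt.1 hi)]

lemma range_wCat (μ : Word n r) : range (wCat μ) = cone μ :=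
  Subset.antisymm (range_subset_iff.2 (wCat_mem_cone μ))
    fun _ hp => ⟨_, wCat_shift_of_mem_cone hp⟩

lemma eq_prepend_of_wCat_eq {a b : Word n r} {y z : Cn n} (h : wCat a y = wCat b z)
    (hab : a.2.length ≤ b.2.length) : y = prepend (b.2.drop a.2.length) z := by
  have h2 := congrArg (fun p : CNR n r => shift a.2.length p.2) h
  simpa only [wCat_eq, shift_prepend, shift_prepend_of_le hab] using h2

lemma eq_wApp_of_wCat_eq {α β : Word n r} {x y : Cn n} (h : wCat α x = wCat β y)
    (hlen : β.2.length ≤ α.2.length) : α = wApp β (α.2.drop β.2.length) := by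
  simp only [wCat_eq, Prod.mk.injEq] at h
  obtain ⟨h1, h2⟩ := h
  rw [← List.take_append_drop β.2.length α.2, prepend_append] at h2
  have htake := prepend_left_injective h2 (by simpa using hlen)
  refine Prod.ext h1 ?_
  conv_lhs => rw [← List.take_append_drop β.2.length α.2, htake]
  rfl

lemma eq_wApp_of_wCat_mem_cone {μ ν : Word n r} {x : Cn n} (hlen : ν.2.length ≤ μ.2.length)
    (h : wCat μ x ∈ cone ν) : μ = wApp ν (μ.2.drop ν.2.length) :=
  eq_wApp_of_wCat_eq (wCat_shift_of_mem_cone h).symm hlen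

lemma cone_wApp_subset (μ : Word n r) (w : List (Fin n)) : cone (wApp μ w) ⊆ cone μ := by
  rw [← range_wCat, ← range_wCat]
  rintro _ ⟨x, rfl⟩
  exact ⟨prepend w x, (wCat_wApp μ w x).symm⟩

lemma cone_subset_of_mem {α β : Word n r} {q : CNR n r} (hα : q ∈ cone α) (hβ : q ∈ cone β)
    (hlen : β.2.length ≤ α.2.length) : cone α ⊆ cone β := by
  rw [← wCat_shift_of_mem_cone hα] at hβ
  rw [eq_wApp_of_wCat_mem_cone hlen hβ]
  exact cone_wApp_subset β _

end Words

section Topology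

variable {n r : ℕ}

lemma isClopen_cone (μ : Word n r) : IsClopen (cone μ) := by
  have : cone μ = Prod.fst ⁻¹' {μ.1} ∩
      ⋂ i : Fin μ.2.length, (fun p : CNR n r => p.2 i) ⁻¹' {μ.2.get i} := by
    ext p; simp [cone, Fin.forall_iff]
  rw [this]
  exact ((isClopen_discrete _).preimage continuous_fst).inter
    (isClopen_iInter_of_finite fun i => (isClopen_discrete _).preimage (by fun_prop))

lemma continuous_wCat (μ : Word n r) : Continuous (wCat μ) := by
  unfold wCat
  refine continuous_const.prodMk (continuous_pi fun i => ?_)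
  split_ifs <;> fun_prop

lemma continuous_shift (m : ℕ) : Continuous (shift (n := n) m) :=
  continuous_pi fun i => continuous_apply (i + m)

def truncate (p : CNR n r) (L : ℕ) : Word n r := (p.1, List.ofFn fun i : Fin L => p.2 i)

lemma length_truncate (p : CNR n r) (L : ℕ) : (truncate p L).2.length = L := by
  simp [truncate]

lemma mem_cone_truncate (p : CNR n r) (L : ℕ) : p ∈ cone (truncate p L) :=
  ⟨rfl, fun i hi => by simp [truncate]⟩

lemma antitone_cone_truncate (p : CNR n r) : Antitone fun L => cone (truncate p L) :=
  fun L L' hL => cone_subset_of_mem (mem_cone_truncate p L') (mem_cone_truncate p L)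
    (by simpa [length_truncate] using hL)

lemma iInter_cone_truncate (p : CNR n r) : ⋂ L, cone (truncate p L) = {p} := by
  refine Subset.antisymm (fun q hq => ?_) (by simpa using mem_cone_truncate p)
  rw [mem_iInter] at hq
  refine Prod.ext (hq 0).1 (funext fun i => ?_)
  simpa [truncate, -List.ofFn_succ] using (hq (i + 1)).2 i (by simp [truncate])

lemma exists_cone_truncate_subset {p : CNR n r} {U : Set (CNR n r)} (hU : U ∈ nhds p) :
    ∃ L, cone (truncate p L) ⊆ U :=
  exists_subset_nhds_of_isCompact' (antitone_cone_truncate p).directed_ge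
    (fun L => (isClopen_cone _).isClosed.isCompact) (fun L => (isClopen_cone _).isClosed)
    (by simpa [iInter_cone_truncate] using hU)

lemma exists_cone_subset_of_isOpen_cover [NeZero n] {ι : Type*} {U : ι → Set (CNR n r)}
    (hU : ∀ i, IsOpen (U i)) (hcover : ⋃ i, U i = univ) :
    ∃ m, ∀ μ : Word n r, m ≤ μ.2.length → ∃ i, cone μ ⊆ U i := by
  have hlocal : ∀ p : CNR n r, ∃ i, ∃ L, cone (truncate p L) ⊆ U i := fun p => by
    obtain ⟨i, hi⟩ := mem_iUnion.1 (hcover ▸ mem_univ p)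
    exact ⟨i, exists_cone_truncate_subset ((hU i).mem_nhds hi)⟩
  choose i L hL using hlocal
  obtain ⟨t, ht⟩ := isCompact_univ.elim_finite_subcover (fun p => cone (truncate p (L p)))
    (fun p => (isClopen_cone _).isOpen) fun p _ => mem_iUnion.2 ⟨p, mem_cone_truncate p _⟩
  refine ⟨t.sup L, fun μ hμ => ?_⟩
  obtain ⟨p, hp_t, hp⟩ := mem_iUnion₂.1 (ht (mem_univ (wCat μ default)))
  refine ⟨i p, (cone_subset_of_mem (wCat_mem_cone μ default) hp ?_).trans (hL p)⟩
  rw [length_truncate]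
  exact (Finset.le_sup hp_t).trans hμ

end Topology

section Higman

variable {n r : ℕ}

lemma eq_of_mem_cone_of_length_eq {α β : Word n r} {p : CNR n r} (hα : p ∈ cone α)
    (hβ : p ∈ cone β) (hlen : α.2.length = β.2.length) : α = β := by
  have := eq_wApp_of_wCat_eq ((wCat_shift_of_mem_cone hα).trans
    (wCat_shift_of_mem_cone hβ).symm) hlen.ge
  rw [← hlen, List.drop_length] at this
  simpa [wApp] using this

lemma cone_eq_image_of_forall_wCat {g : Homeo n r} {μ μ' : Word n r}
    (hg : ∀ x, g (wCat μ x) = wCat μ' x) : cone μ' = g '' cone μ := by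
  rw [← range_wCat, ← range_wCat, ← range_comp]
  exact congrArg range (funext fun x => (hg x).symm)

lemma isHigman_of_fintype {ι : Type*} [Fintype ι] [Nonempty ι] {g : Homeo n r}
    (ν η : ι → Word n r) (hν : ∀ p, ∃! i, p ∈ cone (ν i))
    (hg : ∀ i x, g (wCat (ν i) x) = wCat (η i) x) : IsHigman g := by
  have hη : ∀ p, ∃! i, p ∈ cone (η i) := fun p => by
    simpa only [cone_eq_image_of_forall_wCat (hg _), g.image_eq_preimage_symm, mem_preimage]
      using hν (g.symm p)
  let e := Fintype.equivFin ι
  exact ⟨Fintype.card ι, Fintype.card_pos, ν ∘ e.symm, η ∘ e.symm,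
    fun p => e.symm.existsUnique_congr_right.2 (hν p),
    fun p => e.symm.existsUnique_congr_right.2 (hη p), fun i => hg (e.symm i)⟩

lemma isHigman_of_forall_length_eq [NeZero n] [NeZero r] {g : Homeo n r} (L : ℕ)
    (hg : ∀ μ : Word n r, μ.2.length = L → ∃ μ' : Word n r, ∀ x, g (wCat μ x) = wCat μ' x) :
    IsHigman g := by
  let ν : Fin r × List.Vector (Fin n) L → Word n r := fun j => (j.1, j.2.toList)
  choose η hη using fun j => hg (ν j) j.2.toList_length
  refine isHigman_of_fintype ν η (fun p => ?_) hη
  refine ⟨(p.1, ⟨(truncate p L).2, length_truncate p L⟩), mem_cone_truncate p L, fun j hj => ?_⟩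
  have := eq_of_mem_cone_of_length_eq hj (mem_cone_truncate p L)
    (by simp [ν, length_truncate])
  have h1 : j.1 = p.1 := congrArg Prod.fst this
  have h2 : j.2.toList = (truncate p L).2 := congrArg Prod.snd this
  exact Prod.ext h1 (List.Vector.eq _ _ h2)

open Classical in
noncomputable def swapFun (ν γ : Word n r) (p : CNR n r) : CNR n r :=
  if p ∈ cone ν then wCat γ (shift ν.2.length p.2)
  else if p ∈ cone γ then wCat ν (shift γ.2.length p.2) else p

lemma shift_wCat (μ : Word n r) (x : Cn n) : shift μ.2.length (wCat μ x).2 = x := by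
  rw [wCat_eq, shift_prepend]

lemma swapFun_wCat_left (ν γ : Word n r) (x : Cn n) : swapFun ν γ (wCat ν x) = wCat γ x := by
  rw [swapFun, if_pos (wCat_mem_cone ν x), shift_wCat]

lemma swapFun_wCat_right {ν γ : Word n r} (hd : Disjoint (cone ν) (cone γ)) (x : Cn n) :
    swapFun ν γ (wCat γ x) = wCat ν x := by
  rw [swapFun, if_neg (disjoint_right.1 hd (wCat_mem_cone γ x)), if_pos (wCat_mem_cone γ x),
    shift_wCat]

lemma swapFun_of_notMem {ν γ : Word n r} {p : CNR n r} (hν : p ∉ cone ν) (hγ : p ∉ cone γ) :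
    swapFun ν γ p = p := by
  rw [swapFun, if_neg hν, if_neg hγ]

lemma swapFun_swapFun {ν γ : Word n r} (hd : Disjoint (cone ν) (cone γ)) (p : CNR n r) :
    swapFun ν γ (swapFun ν γ p) = p := by
  by_cases hν : p ∈ cone ν
  · rw [← wCat_shift_of_mem_cone hν, swapFun_wCat_left, swapFun_wCat_right hd]
  by_cases hγ : p ∈ cone γ
  · rw [← wCat_shift_of_mem_cone hγ, swapFun_wCat_right hd, swapFun_wCat_left]
  rw [swapFun_of_notMem hν hγ, swapFun_of_notMem hν hγ]

lemma continuous_swapFun (ν γ : Word n r) : Continuous (swapFun ν γ) := by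
  have hfr : ∀ μ : Word n r, frontier (cone μ) = ∅ :=
    fun μ => (isClopen_cone μ).frontier_eq
  have hcont : ∀ μ μ' : Word n r, Continuous fun p : CNR n r => wCat μ' (shift μ.2.length p.2) :=
    fun μ μ' => (continuous_wCat μ').comp ((continuous_shift _).comp continuous_snd)
  classical
  exact Continuous.if (by simp [hfr]) (hcont ν γ)
    (Continuous.if (by simp [hfr]) (hcont γ ν) continuous_id)

noncomputable def swapCones {ν γ : Word n r} (hd : Disjoint (cone ν) (cone γ)) : Homeo n r where
  toFun := swapFun ν γ
  invFun := swapFun ν γ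
  left_inv := swapFun_swapFun hd
  right_inv := swapFun_swapFun hd
  continuous_toFun := continuous_swapFun ν γ
  continuous_invFun := continuous_swapFun ν γ

lemma swapCones_apply {ν γ : Word n r} (hd : Disjoint (cone ν) (cone γ)) (p : CNR n r) :
    swapCones hd p = swapFun ν γ p := rfl

lemma isHigman_swapCones [NeZero n] [NeZero r] {ν γ : Word n r}
    (hd : Disjoint (cone ν) (cone γ)) : IsHigman (swapCones hd) := by
  refine isHigman_of_forall_length_eq (max ν.2.length γ.2.length) fun μ hμ => ?_
  by_cases hν : ∃ w, μ = wApp ν w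
  · obtain ⟨w, rfl⟩ := hν
    exact ⟨wApp γ w, fun x => by
      rw [wCat_wApp, wCat_wApp, swapCones_apply, swapFun_wCat_left]⟩
  by_cases hγ : ∃ w, μ = wApp γ w
  · obtain ⟨w, rfl⟩ := hγ
    exact ⟨wApp ν w, fun x => by
      rw [wCat_wApp, wCat_wApp, swapCones_apply, swapFun_wCat_right hd]⟩
  refine ⟨μ, fun x => (swapCones_apply hd _).trans (swapFun_of_notMem ?_ ?_)⟩
  · exact fun hmem => hν ⟨_, eq_wApp_of_wCat_mem_cone (by omega) hmem⟩
  · exact fun hmem => hγ ⟨_, eq_wApp_of_wCat_mem_cone (by omega) hmem⟩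

end Higman

section Fashion

variable {n r : ℕ}

lemma conjH_apply_apply (h g : Homeo n r) (p : CNR n r) : conjH h g (h p) = h (g p) := by
  simp [conjH]

lemma SameFashion.symm {h : Homeo n r} {α β : Word n r} (hαβ : SameFashion h α β) :
    SameFashion h β α :=
  let ⟨α', β', f, hα, hβ⟩ := hαβ
  ⟨β', α', f, hβ, hα⟩

lemma sameFashion_of_wCat_eq {h : Homeo n r} {α β α' β' γ γ' : Word n r} {f g : Cn n → Cn n}
    (hα : ∀ x, h (wCat α x) = wCat α' (f x)) (hβ : ∀ x, h (wCat β x) = wCat β' (g x))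
    (hγ : ∀ x, wCat γ (f x) = wCat γ' (g x)) (hlen : γ.2.length ≤ γ'.2.length) :
    SameFashion h α β :=
  ⟨wApp α' (γ'.2.drop γ.2.length), β', g,
    fun x => by rw [hα, eq_prepend_of_wCat_eq (hγ x) hlen, wCat_wApp], hβ⟩

lemma SameFashion.trans {h : Homeo n r} {α β γ : Word n r} (hαβ : SameFashion h α β)
    (hβγ : SameFashion h β γ) : SameFashion h α γ := by
  obtain ⟨α', β', f, hα, hβ⟩ := hαβ
  obtain ⟨β'', γ', g, hβ', hγ⟩ := hβγ
  have hβ'' : ∀ x, wCat β' (f x) = wCat β'' (g x) := fun x => (hβ x).symm.trans (hβ' x)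
  rcases le_total β'.2.length β''.2.length with hle | hle
  · exact sameFashion_of_wCat_eq hα hγ hβ'' hle
  · exact (sameFashion_of_wCat_eq hγ hα (fun x => (hβ'' x).symm) hle).symm

def AlmostSameFashion (h : Homeo n r) (ν η : Word n r) : Prop :=
  ∃ k : ℕ, ∀ χ : List (Fin n), k ≤ χ.length → SameFashion h (wApp ν χ) (wApp η χ)

lemma AlmostSameFashion.symm {h : Homeo n r} {ν η : Word n r} (hνη : AlmostSameFashion h ν η) :
    AlmostSameFashion h η ν :=
  let ⟨k, hk⟩ := hνη
  ⟨k, fun χ hχ => (hk χ hχ).symm⟩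

lemma AlmostSameFashion.trans {h : Homeo n r} {ν η ζ : Word n r}
    (hνη : AlmostSameFashion h ν η) (hηζ : AlmostSameFashion h η ζ) :
    AlmostSameFashion h ν ζ :=
  let ⟨k, hk⟩ := hνη
  let ⟨k', hk'⟩ := hηζ
  ⟨max k k', fun χ hχ => (hk χ (le_of_max_le_left hχ)).trans (hk' χ (le_of_max_le_right hχ))⟩

theorem almostSameFashion_of_disjoint [NeZero n] [NeZero r] {h : Homeo n r}
    (hconj : ∀ g : Homeo n r, IsHigman g → IsHigman (conjH h g)) {ν γ : Word n r}
    (hd : Disjoint (cone ν) (cone γ)) : AlmostSameFashion h ν γ := by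
  obtain ⟨k, -, νs, ηs, hνs, -, hact⟩ := hconj _ (isHigman_swapCones hd)
  obtain ⟨m, hm⟩ := exists_cone_subset_of_isOpen_cover
    (fun i => (isClopen_cone (νs i)).isOpen.preimage h.continuous)
    (eq_univ_of_forall fun p => mem_iUnion.2 (hνs (h p)).exists)
  refine ⟨m, fun χ hχ => ?_⟩
  obtain ⟨i, hi⟩ := hm (wApp ν χ) (by simp only [wApp, List.length_append]; omega)
  let f : Cn n → Cn n := fun x => shift (νs i).2.length (h (wCat (wApp ν χ) x)).2
  have hν : ∀ x, h (wCat (wApp ν χ) x) = wCat (νs i) (f x) :=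
    fun x => (wCat_shift_of_mem_cone (hi (wCat_mem_cone _ x))).symm
  refine ⟨νs i, ηs i, f, hν, fun x => ?_⟩
  calc h (wCat (wApp γ χ) x) = h (swapCones hd (wCat (wApp ν χ) x)) := by
        rw [swapCones_apply, wCat_wApp, wCat_wApp, swapFun_wCat_left]
    _ = conjH h (swapCones hd) (wCat (νs i) (f x)) := by rw [← hν, conjH_apply_apply]
    _ = wCat (ηs i) (f x) := hact i (f x)

lemma disjoint_cone_truncate {μ : Word n r} {p : CNR n r} {L : ℕ} (hp : p ∉ cone μ)
    (hL : μ.2.length ≤ L) : Disjoint (cone μ) (cone (truncate p L)) :=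
  disjoint_left.2 fun _ hμ ht => hp <|
    cone_subset_of_mem ht hμ (by rwa [length_truncate]) (mem_cone_truncate p L)

end Fashion

theorem conjugator_acts_almost_same_fashion_general (n r : ℕ) (h : Homeo n r)
    (hconj : ∀ g : Homeo n r, IsHigman g → IsHigman (conjH h g))
    (ν η : Word n r) (hU : cone ν ∪ cone η ≠ Set.univ) :
    ∃ k : ℕ, ∀ χ : List (Fin n), k ≤ χ.length →
      SameFashion h (wApp ν χ) (wApp η χ) := by
  obtain ⟨p, hp⟩ := (ne_univ_iff_exists_notMem _).1 hU
  have : NeZero n := NeZero.of_pos (p.2 0).pos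
  have : NeZero r := NeZero.of_pos p.1.pos
  let γ := truncate p (max ν.2.length η.2.length)
  have hνγ : Disjoint (cone ν) (cone γ) :=
    disjoint_cone_truncate (fun hν => hp (Or.inl hν)) (le_max_left _ _)
  have hηγ : Disjoint (cone η) (cone γ) :=
    disjoint_cone_truncate (fun hη => hp (Or.inr hη)) (le_max_right _ _)
  exact (almostSameFashion_of_disjoint hconj hνγ).trans
    (almostSameFashion_of_disjoint hconj hηγ).symm

/-- If `h⁻¹ G_{n,r} h ⊆ G_{n,r}` then for all words `ν`, `η` with
`U_ν ∪ U_η ≠ 𝔠_{n,r}`, `h` acts on `U_ν` and `U_η` almost in the same fashion. -/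
theorem conjugator_acts_almost_same_fashion (n r : ℕ) (hn : 2 ≤ n) (hr1 : 1 ≤ r)
    (hrn : r < n) (h : Homeo n r)
    (hconj : ∀ g : Homeo n r, IsHigman g → IsHigman (conjH h g))
    (ν η : Word n r) (hU : cone ν ∪ cone η ≠ Set.univ) :
    ∃ k : ℕ, ∀ χ : List (Fin n), k ≤ χ.length →
      SameFashion h (wApp ν χ) (wApp η χ) :=
  conjugator_acts_almost_same_fashion_general n r h hconj ν η hU

end HigmanAut
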